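/- arXiv:2507.15611 — 4 statements merged into one kernel-verified Lean document; each statement's English description precedes it below -/
import Mathlib

section
/- In the algebra E, the bidegree (4, 65) component E^{4,65} is a one-dimensional F₂-vector space with basis the class of D₃(0); in particular D₃(0) ≠ 0 in E while the monomial h₀h₄²h₅ equals 0 in E. (This verifies Ext_A^{4,4+61}(ℤ/2,ℤ/2) = ⟨D₃(0)⟩.) -/
noncomputable section

open MvPolynomial

/-- Generators of Chen's algebra `E` in homological degrees ≤ 4.
Here `g i` denotes the generator `g_{i+1}` (the family `g` starts at index 1). -/
inductive Gen : Type
  | h (i : ℕ)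
  | c (i : ℕ)
  | d (i : ℕ)
  | e (i : ℕ)
  | f (i : ℕ)
  | g (i : ℕ)
  | p (i : ℕ)
  | D3 (i : ℕ)
  | p' (i : ℕ)

/-- Homological degree of the generators. -/
def hdeg : Gen → ℕ
  | .h _ => 1
  | .c _ => 3
  | _ => 4

/-- Internal degree of the generators. -/
def ideg : Gen → ℕ
  | .h i => 2 ^ i
  | .c i => 2 ^ (i + 3) + 2 ^ (i + 1) + 2 ^ i
  | .d i => 2 ^ (i + 4) + 2 ^ (i + 1)
  | .e i => 2 ^ (i + 4) + 2 ^ (i + 2) + 2 ^ i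
  | .f i => 2 ^ (i + 4) + 2 ^ (i + 2) + 2 ^ (i + 1)
  | .g i => 2 ^ (i + 4) + 2 ^ (i + 3)      -- internal degree of `g_{i+1}`
  | .p i => 2 ^ (i + 5) + 2 ^ (i + 2) + 2 ^ i
  | .D3 i => 2 ^ (i + 6) + 2 ^ i
  | .p' i => 2 ^ (i + 6) + 2 ^ (i + 3) + 2 ^ i

abbrev P := MvPolynomial Gen (ZMod 2)

/-- Chen's relations in homological degrees ≤ 4:
`hᵢhᵢ₊₁ = 0`, `hᵢhᵢ₊₂² = 0`, `hᵢ²hᵢ₊₃² = 0`, `hᵢ³ = hᵢ₋₁²hᵢ₊₁` (i ≥ 1), and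
`hⱼcᵢ = 0` for `j ∈ {i-1, i, i+2, i+3}`. -/
def rels : Set P :=
  ⋃ i : ℕ,
    ({ X (Gen.h i) * X (Gen.h (i + 1)),
       X (Gen.h i) * X (Gen.h (i + 2)) ^ 2,
       X (Gen.h i) ^ 2 * X (Gen.h (i + 3)) ^ 2,
       X (Gen.h (i + 1)) ^ 3 - X (Gen.h i) ^ 2 * X (Gen.h (i + 2)),
       X (Gen.h i) * X (Gen.c (i + 1)),
       X (Gen.h i) * X (Gen.c i),
       X (Gen.h (i + 2)) * X (Gen.c i),
       X (Gen.h (i + 3)) * X (Gen.c i) } : Set P)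

def relIdeal : Ideal P := Ideal.span rels

/-- Chen's algebra `E`, isomorphic to `Ext_A^{k,*}(ℤ/2, ℤ/2)` in homological degrees `k ≤ 4`. -/
abbrev E := P ⧸ relIdeal

def mkE : P →ₐ[ZMod 2] E := Ideal.Quotient.mkₐ (ZMod 2) relIdeal

/-- The bidegree `(k, d)` component `E^{k,d}` of `E`: the image of the space of polynomials
that are weighted homogeneous of homological degree `k` and internal degree `d`. -/
def component (k d : ℕ) : Submodule (ZMod 2) E :=
  Submodule.map mkE.toLinearMap
    (weightedHomogeneousSubmodule (ZMod 2) hdeg k ⊓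
      weightedHomogeneousSubmodule (ZMod 2) ideg d)

/-- `n_{s,t,u} = 2^{s+t+u} + 2^{s+t} + 2^s - 3`. -/
def nstu (s t u : ℕ) : ℕ := 2 ^ (s + t + u) + 2 ^ (s + t) + 2 ^ s - 3

/-!
A monomial of homological degree 4 is a single generator of degree 4, a product `cᵢhⱼ`, or a
product of four `hᵢ`. Internal degree 65 then leaves only `D₃(0)` (the other generators of
degree 4 have internal degree `2ⁱ` times 18, 21, 22, 24, 37 or 73), no `cᵢhⱼ` (`65 - 11·2ⁱ` is
never a power of 2), and among the `hᵢ` only `h₀h₄²h₅` (`65 = 1 + 16 + 16 + 32`), which vanishes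
because `h₄h₅ = 0`. So `E^{4,65}` is spanned by `D₃(0)`, and `D₃(0) ≠ 0` because every relation
lies in the ideal generated by the `hᵢ`.
-/

open Gen

theorem MvPolynomial.weightedHomogeneousSubmodule_inf_eq_restrictSupport {σ R M M' : Type*}
    [CommSemiring R] [AddCommMonoid M] [AddCommMonoid M'] (w : σ → M) (w' : σ → M') (m : M)
    (m' : M') :
    weightedHomogeneousSubmodule R w m ⊓ weightedHomogeneousSubmodule R w' m' =
      restrictSupport R {d | Finsupp.weight w d = m ∧ Finsupp.weight w' d = m'} := by
  ext p
  simp only [Submodule.mem_inf, mem_weightedHomogeneousSubmodule, IsWeightedHomogeneous,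
    mem_restrictSupport_iff, Set.subset_def, Finset.mem_coe, mem_support_iff, Set.mem_ofPred_eq]
  grind

theorem Finsupp.weight_eq_sum_map_toMultiset {σ M : Type*} [AddCommMonoid M] (w : σ → M)
    (v : σ →₀ ℕ) : weight w v = ((toMultiset v).map w).sum := by
  induction v using Finsupp.induction with
  | zero => simp
  | single_add a n v _ _ ih =>
    simp [toMultiset_add, ih, weight_single, Multiset.map_nsmul, Multiset.sum_nsmul]

lemma ideg_eq_65_iff {x : Gen} : ideg x = 65 ↔ x = D3 0 := by
  refine ⟨fun hx => ?_, fun hx => hx ▸ rfl⟩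
  cases x <;> rename_i i <;> rcases i with _ | i <;> simp only [ideg, pow_succ] at hx ⊢ <;> omega

lemma hdeg_cases (x : Gen) : hdeg x = 1 ∨ hdeg x = 3 ∨ hdeg x = 4 := by
  cases x <;> simp [hdeg]

lemma exists_eq_h_of_hdeg_eq_one {x : Gen} (hx : hdeg x = 1) : ∃ i, x = h i := by
  cases x <;> simp_all [hdeg]

lemma exists_eq_c_of_hdeg_eq_three {x : Gen} (hx : hdeg x = 3) : ∃ i, x = c i := by
  cases x <;> simp_all [hdeg]

lemma lt_seven_of_two_pow_le {n : ℕ} (hn : 2 ^ n ≤ 65) : n < 7 :=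
  (Nat.pow_lt_pow_iff_right (by norm_num)).1 (hn.trans_lt (by norm_num))

lemma two_pow_add_ideg_c_ne (i j : ℕ) : 2 ^ j + ideg (c i) ≠ 65 := by
  intro hij
  simp only [ideg] at hij
  obtain ⟨hi, hj⟩ : i + 3 < 7 ∧ j < 7 := by
    constructor <;> apply lt_seven_of_two_pow_le <;>
      linarith [Nat.zero_le (2 ^ j), Nat.zero_le (2 ^ (i + 3)), Nat.zero_le (2 ^ (i + 1)),
        Nat.zero_le (2 ^ i)]
  have key : ∀ i < 4, ∀ j < 7, 2 ^ j + (2 ^ (i + 3) + 2 ^ (i + 1) + 2 ^ i) ≠ 65 := by decide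
  exact key i (by omega) j hj hij

set_option synthInstance.maxSize 1000 in
lemma multiset_eq_of_four_two_pows_sum_eq_65 {a b c d : ℕ}
    (habcd : 2 ^ a + 2 ^ b + 2 ^ c + 2 ^ d = 65) :
    ({a, b, c, d} : Multiset ℕ) = {0, 4, 4, 5} := by
  obtain ⟨ha, hb, hc, hd⟩ : a < 7 ∧ b < 7 ∧ c < 7 ∧ d < 7 := by
    refine ⟨?_, ?_, ?_, ?_⟩ <;> apply lt_seven_of_two_pow_le <;>
      linarith [Nat.zero_le (2 ^ a), Nat.zero_le (2 ^ b), Nat.zero_le (2 ^ c), Nat.zero_le (2 ^ d)]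
  have key : ∀ a < 7, ∀ b < 7, ∀ c < 7, ∀ d < 7, 2 ^ a + 2 ^ b + 2 ^ c + 2 ^ d = 65 →
      ({a, b, c, d} : Multiset ℕ) = {0, 4, 4, 5} := by decide
  exact key a ha b hb c hc d hd habcd

lemma ideg_add_ideg_ne_65 {x y : Gen} (h4 : hdeg x + hdeg y = 4) : ideg x + ideg y ≠ 65 := by
  rcases hdeg_cases x with hx | hx | hx <;> rcases hdeg_cases y with hy | hy | hy <;> try omega
  · obtain ⟨j, rfl⟩ := exists_eq_h_of_hdeg_eq_one hx
    obtain ⟨i, rfl⟩ := exists_eq_c_of_hdeg_eq_three hy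
    exact two_pow_add_ideg_c_ne i j
  · obtain ⟨i, rfl⟩ := exists_eq_c_of_hdeg_eq_three hx
    obtain ⟨j, rfl⟩ := exists_eq_h_of_hdeg_eq_one hy
    rw [add_comm]
    exact two_pow_add_ideg_c_ne i j

lemma multiset_eq_of_bidegree_four_65 (s : Multiset Gen) (h4 : (s.map hdeg).sum = 4)
    (h65 : (s.map ideg).sum = 65) : s = {D3 0} ∨ s = {h 0, h 4, h 4, h 5} := by
  rcases s with ⟨l⟩
  simp only [Multiset.quot_mk_to_coe'', Multiset.map_coe, Multiset.sum_coe] at h4 h65 ⊢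
  have hd := hdeg_cases
  match l, h4, h65 with
  | [], h4, _ => simp at h4
  | [x], _, h65 =>
    left
    simp only [List.map_cons, List.map_nil, List.sum_cons, List.sum_nil, add_zero] at h65
    simp [ideg_eq_65_iff.1 h65]
  | [x, y], h4, h65 =>
    simp only [List.map_cons, List.map_nil, List.sum_cons, List.sum_nil, add_zero] at h4 h65
    exact absurd h65 (ideg_add_ideg_ne_65 h4)
  | [x, y, z], h4, _ =>
    simp only [List.map_cons, List.map_nil, List.sum_cons, List.sum_nil, add_zero] at h4
    have := hd x; have := hd y; have := hd z
    omega
  | [x, y, z, w], h4, h65 =>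
    right
    simp only [List.map_cons, List.map_nil, List.sum_cons, List.sum_nil, add_zero] at h4 h65
    have := hd x; have := hd y; have := hd z; have := hd w
    obtain ⟨a, rfl⟩ := exists_eq_h_of_hdeg_eq_one (x := x) (by omega)
    obtain ⟨b, rfl⟩ := exists_eq_h_of_hdeg_eq_one (x := y) (by omega)
    obtain ⟨c, rfl⟩ := exists_eq_h_of_hdeg_eq_one (x := z) (by omega)
    obtain ⟨d, rfl⟩ := exists_eq_h_of_hdeg_eq_one (x := w) (by omega)
    have habcd := multiset_eq_of_four_two_pows_sum_eq_65 (a := a) (b := b) (c := c) (d := d)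
      (by simpa [ideg, add_assoc] using h65)
    simpa [← Multiset.cons_coe] using congrArg (Multiset.map h) habcd
  | x :: y :: z :: w :: v :: l, h4, _ =>
    simp only [List.map_cons, List.sum_cons] at h4
    have := hd x; have := hd y; have := hd z; have := hd w; have := hd v
    omega

lemma exponents_of_bidegree_four_65 :
    {v : Gen →₀ ℕ | Finsupp.weight hdeg v = 4 ∧ Finsupp.weight ideg v = 65} =
      {Finsupp.single (D3 0) 1,
        Finsupp.single (h 0) 1 + Finsupp.single (h 4) 2 + Finsupp.single (h 5) 1} := by
  ext v
  simp only [Set.mem_ofPred_eq, Set.mem_insert_iff, Set.mem_singleton_iff]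
  constructor
  · rintro ⟨h4, h65⟩
    classical
    rw [Finsupp.weight_eq_sum_map_toMultiset] at h4 h65
    rw [← Finsupp.toMultiset_toFinsupp v]
    refine (multiset_eq_of_bidegree_four_65 _ h4 h65).imp (fun hs => ?_) (fun hs => ?_) <;> rw [hs]
    · exact Multiset.toFinsupp_singleton _
    · simp only [Multiset.insert_eq_cons, ← Multiset.singleton_add, Multiset.toFinsupp_add,
        Multiset.toFinsupp_singleton]
      rw [← one_add_one_eq_two, Finsupp.single_add]
      abel
  · rintro (rfl | rfl) <;> simp [Finsupp.weight_single, hdeg, ideg]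

lemma bidegree_four_65_eq_span :
    weightedHomogeneousSubmodule (ZMod 2) hdeg 4 ⊓ weightedHomogeneousSubmodule (ZMod 2) ideg 65 =
      Submodule.span (ZMod 2) {X (D3 0), X (h 0) * X (h 4) ^ 2 * X (h 5)} := by
  rw [weightedHomogeneousSubmodule_inf_eq_restrictSupport, exponents_of_bidegree_four_65,
    restrictSupport_eq_span, Set.image_pair, monomial_add_single, monomial_add_single, pow_one]
  rfl

lemma mkE_eq_zero_iff {p : P} : mkE p = 0 ↔ p ∈ relIdeal :=
  Ideal.Quotient.eq_zero_iff_mem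

lemma mkE_h0_h4_sq_h5_eq_zero : mkE (X (h 0) * X (h 4) ^ 2 * X (h 5)) = 0 := by
  have h45 : (X (h 4) * X (h 5) : P) ∈ relIdeal :=
    Ideal.subset_span (Set.mem_iUnion.2 ⟨4, by simp⟩)
  rw [mkE_eq_zero_iff]
  convert relIdeal.mul_mem_left (X (h 0) * X (h 4)) h45 using 1
  ring

lemma mkE_X_D3_ne_zero : mkE (X (D3 0)) ≠ 0 := by
  let ε : Gen → ZMod 2 := fun x => match x with | .h _ => 0 | _ => 1
  have hker : relIdeal ≤ RingHom.ker (aeval ε) := by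
    rw [relIdeal, Ideal.span_le]
    intro r hr
    obtain ⟨i, hi⟩ := Set.mem_iUnion.1 hr
    simp only [Set.mem_insert_iff, Set.mem_singleton_iff] at hi
    rcases hi with rfl | rfl | rfl | rfl | rfl | rfl | rfl | rfl <;> simp [ε]
  intro hD3
  simpa [ε] using hker (mkE_eq_zero_iff.1 hD3)

/-- `E^{4,65}` is one-dimensional over `F₂` with basis the class of `D₃(0)`;
in particular `D₃(0) ≠ 0` while `h₀h₄²h₅ = 0` in `E`. -/
theorem stmt0 :
    component 4 65 = Submodule.span (ZMod 2) {mkE (X (Gen.D3 0))} ∧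
      mkE (X (Gen.D3 0)) ≠ 0 ∧
      mkE (X (Gen.h 0) * X (Gen.h 4) ^ 2 * X (Gen.h 5)) = 0 := by
  refine ⟨?_, mkE_X_D3_ne_zero, mkE_h0_h4_sq_h5_eq_zero⟩
  rw [component, bidegree_four_65_eq_span, Submodule.map_span, Set.image_pair,
    AlgHom.toLinearMap_apply, AlgHom.toLinearMap_apply, mkE_h0_h4_sq_h5_eq_zero, Set.pair_comm,
    Submodule.span_insert_zero]
end
end

section
/- For all natural numbers t ≥ 1 with t ≠ 2 and u ≥ 1, the bidegree (4, 4 + n_{1,t,u}) component E^{4, 2^{t+u+1}+2^{t+1}+3} of E is the zero vector space. -/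
noncomputable section

open MvPolynomial

/-!
A monomial of homological degree 4 is a single generator of degree 4, a product `c_i h_j`, or a
product of four `h`'s. The internal degree `2^a + 2^b + 3` (here `a = t + 1 ≥ 2`, `b = t + u + 1`)
is `3 mod 4`, which no generator of degree 4 is. For `c_i h_j` the residue forces `c_1 h_0` or
`c_0 h_j` with `j ≥ 2`; then `2^j + 8 = 2^a + 2^b`, and uniqueness of binary expansions gives
`j ≤ 3` unless `a = 3`, so the product is one of the relations `h_0 c_1`, `h_2 c_0`, `h_3 c_0`.
For four `h`'s the residue forces both `h_0` and `h_1` to occur, killed by `h_0 h_1 = 0`, unless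
three factors are `h_0` and the fourth is `h_j` with `2^j = 2^a + 2^b`, which is impossible.
-/

lemma four_dvd_two_pow {k : ℕ} (hk : 2 ≤ k) : 4 ∣ 2 ^ k := by
  simpa using Nat.pow_dvd_pow 2 hk

lemma two_pow_cases (j : ℕ) : j = 0 ∧ 2 ^ j = 1 ∨ j = 1 ∧ 2 ^ j = 2 ∨ 2 ≤ j ∧ 4 ∣ 2 ^ j := by
  rcases j with _ | _ | j
  · simp
  · simp
  · exact Or.inr (Or.inr ⟨by omega, four_dvd_two_pow (by omega)⟩)

lemma Nat.log_two_pow_add_two_pow {a b : ℕ} (hab : a < b) : Nat.log 2 (2 ^ a + 2 ^ b) = b := by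
  have : 2 ^ a < 2 ^ b := Nat.pow_lt_pow_right (by norm_num) hab
  refine Nat.log_eq_of_pow_le_of_lt_pow (Nat.le_add_left _ _) ?_
  rw [pow_succ]
  omega

lemma two_pow_ne_two_pow_add_two_pow {a b : ℕ} (hab : a < b) (m : ℕ) :
    2 ^ m ≠ 2 ^ a + 2 ^ b := by
  intro h
  have hm : m = b := by
    rw [← Nat.log_two_pow_add_two_pow hab, ← h, Nat.log_pow (by norm_num)]
  subst hm
  have := Nat.two_pow_pos a
  omega

lemma two_pow_add_two_pow_inj {a b c d : ℕ} (hab : a < b) (hcd : c < d)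
    (h : 2 ^ a + 2 ^ b = 2 ^ c + 2 ^ d) : a = c ∧ b = d := by
  have hbd : b = d := by
    rw [← Nat.log_two_pow_add_two_pow hab, h, Nat.log_two_pow_add_two_pow hcd]
  subst hbd
  exact ⟨Nat.pow_right_injective le_rfl (Nat.add_right_cancel h), rfl⟩

lemma hdeg_cases_s5 (g : Gen) : (∃ j, g = .h j) ∨ (∃ i, g = .c i) ∨ hdeg g = 4 := by
  cases g
  · exact Or.inl ⟨_, rfl⟩
  · exact Or.inr (Or.inl ⟨_, rfl⟩)
  all_goals exact Or.inr (Or.inr rfl)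

lemma eq_zero_of_weight_hdeg_eq_zero {σ : Gen →₀ ℕ} (h : σ.weight hdeg = 0) : σ = 0 := by
  have : Finsupp.NonTorsionWeight ℕ hdeg :=
    Finsupp.nonTorsionWeight_of ℕ (w := hdeg) fun g => by cases g <;> simp [hdeg]
  exact (Finsupp.weight_eq_zero_iff_eq_zero hdeg).1 h

lemma exists_eq_add_single_of_weight_hdeg {σ : Gen →₀ ℕ} {n : ℕ} (h : σ.weight hdeg = n + 1) :
    ∃ τ g, σ = τ + Finsupp.single g 1 ∧ τ.weight hdeg + hdeg g = n + 1 := by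
  obtain ⟨g, hg⟩ : ∃ g, σ g ≠ 0 := by
    by_contra! h0
    simp [show σ = 0 from Finsupp.ext h0] at h
  exact ⟨σ - Finsupp.single g 1, g, (Finsupp.sub_add_single_one_cancel hg).symm,
    (Finsupp.weight_sub_single_add hg).trans h⟩

section

open Finsupp

lemma weight_hdeg_eq_one {σ : Gen →₀ ℕ} (h : σ.weight hdeg = 1) :
    ∃ j, σ = single (Gen.h j) 1 := by
  obtain ⟨τ, g, rfl, hw⟩ := exists_eq_add_single_of_weight_hdeg h
  rcases hdeg_cases_s5 g with ⟨j, rfl⟩ | ⟨i, rfl⟩ | hg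
  · obtain rfl : τ = 0 := eq_zero_of_weight_hdeg_eq_zero (by simpa [hdeg] using hw)
    exact ⟨j, zero_add _⟩
  · simp only [hdeg] at hw; omega
  · omega

lemma weight_hdeg_eq_two {σ : Gen →₀ ℕ} (h : σ.weight hdeg = 2) :
    ∃ j₁ j₂, σ = single (Gen.h j₁) 1 + single (Gen.h j₂) 1 := by
  obtain ⟨τ, g, rfl, hw⟩ := exists_eq_add_single_of_weight_hdeg h
  rcases hdeg_cases_s5 g with ⟨j, rfl⟩ | ⟨i, rfl⟩ | hg
  · obtain ⟨j₁, rfl⟩ := weight_hdeg_eq_one (σ := τ) (by simp only [hdeg] at hw; omega)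
    exact ⟨j₁, j, rfl⟩
  · simp only [hdeg] at hw; omega
  · omega

lemma weight_hdeg_eq_three {σ : Gen →₀ ℕ} (h : σ.weight hdeg = 3) :
    (∃ j₁ j₂ j₃, σ = single (Gen.h j₁) 1 + single (Gen.h j₂) 1 + single (Gen.h j₃) 1) ∨
      ∃ i, σ = single (Gen.c i) 1 := by
  obtain ⟨τ, g, rfl, hw⟩ := exists_eq_add_single_of_weight_hdeg h
  rcases hdeg_cases_s5 g with ⟨j, rfl⟩ | ⟨i, rfl⟩ | hg
  · obtain ⟨j₁, j₂, rfl⟩ := weight_hdeg_eq_two (σ := τ) (by simp only [hdeg] at hw; omega)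
    exact Or.inl ⟨j₁, j₂, j, rfl⟩
  · obtain rfl : τ = 0 := eq_zero_of_weight_hdeg_eq_zero (by simpa [hdeg] using hw)
    exact Or.inr ⟨i, zero_add _⟩
  · omega

lemma weight_hdeg_eq_four {σ : Gen →₀ ℕ} (h : σ.weight hdeg = 4) :
    (∃ x, hdeg x = 4 ∧ σ = single x 1) ∨
      (∃ i j, σ = single (Gen.c i) 1 + single (Gen.h j) 1) ∨
      ∃ j₁ j₂ j₃ j₄, σ = single (Gen.h j₁) 1 + single (Gen.h j₂) 1 + single (Gen.h j₃) 1 +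
        single (Gen.h j₄) 1 := by
  obtain ⟨τ, g, rfl, hw⟩ := exists_eq_add_single_of_weight_hdeg h
  rcases hdeg_cases_s5 g with ⟨j, rfl⟩ | ⟨i, rfl⟩ | hg
  · rcases weight_hdeg_eq_three (σ := τ) (by simp only [hdeg] at hw; omega) with
      ⟨j₁, j₂, j₃, rfl⟩ | ⟨i, rfl⟩
    · exact Or.inr (Or.inr ⟨j₁, j₂, j₃, j, rfl⟩)
    · exact Or.inr (Or.inl ⟨i, j, rfl⟩)
  · obtain ⟨j, rfl⟩ := weight_hdeg_eq_one (σ := τ) (by simp only [hdeg] at hw; omega)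
    exact Or.inr (Or.inl ⟨i, j, add_comm _ _⟩)
  · obtain rfl : τ = 0 := eq_zero_of_weight_hdeg_eq_zero (by omega)
    exact Or.inl ⟨g, hg, zero_add _⟩

end

lemma ideg_mod_four_ne_three {x : Gen} (hx : hdeg x = 4) : ideg x % 4 ≠ 3 := by
  cases x with
  | h i | c i => simp [hdeg] at hx
  | d i | e i | f i | g i | p i | D3 i | p' i =>
    have := four_dvd_two_pow (k := i + 2) (by omega)
    have := four_dvd_two_pow (k := i + 3) (by omega)
    have := four_dvd_two_pow (k := i + 4) (by omega)
    have := four_dvd_two_pow (k := i + 5) (by omega)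
    have := four_dvd_two_pow (k := i + 6) (by omega)
    have := two_pow_cases i
    have := two_pow_cases (i + 1)
    simp only [ideg]
    omega

lemma X_h_mul_X_h_mem_relIdeal (i : ℕ) : X (Gen.h i) * X (Gen.h (i + 1)) ∈ relIdeal :=
  Ideal.subset_span (Set.mem_iUnion.2 ⟨i, by simp⟩)

lemma multiset_prod_X_h_mem_relIdeal {s : Multiset ℕ} (h0 : 0 ∈ s) (h1 : 1 ∈ s) :
    (s.map fun j => (X (Gen.h j) : P)).prod ∈ relIdeal := by
  have hle : ({0, 1} : Multiset ℕ) ≤ s :=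
    (Multiset.le_iff_subset (by decide)).2 (by simp [Multiset.subset_iff, h0, h1])
  obtain ⟨q, hq⟩ :=
    Multiset.prod_dvd_prod_of_le (Multiset.map_le_map (f := fun j => (X (Gen.h j) : P)) hle)
  rw [hq]
  exact Ideal.mul_mem_right _ _ (by simpa using X_h_mul_X_h_mem_relIdeal 0)

lemma X_c_mul_X_h_mem_relIdeal {a b i j : ℕ} (ha : 2 ≤ a) (hab : a < b) (ha3 : a ≠ 3)
    (hd : ideg (.c i) + 2 ^ j = 2 ^ a + 2 ^ b + 3) :
    X (Gen.c i) * X (Gen.h j) ∈ relIdeal := by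
  simp only [ideg] at hd
  have := four_dvd_two_pow ha
  have := four_dvd_two_pow (ha.trans hab.le)
  have := four_dvd_two_pow (k := i + 3) (by omega)
  have := two_pow_cases i
  have := two_pow_cases (i + 1)
  have := two_pow_cases j
  rw [mul_comm]
  obtain ⟨rfl, hj⟩ | ⟨rfl, rfl⟩ : i = 0 ∧ 2 ≤ j ∨ i = 1 ∧ j = 0 := by omega
  · have hj3 : j ≤ 3 := by
      by_contra! hj3
      exact ha3 (two_pow_add_two_pow_inj hab hj3 (by omega)).1
    interval_cases j <;> exact Ideal.subset_span (Set.mem_iUnion.2 ⟨0, by simp⟩)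
  · exact Ideal.subset_span (Set.mem_iUnion.2 ⟨0, by simp⟩)

lemma zero_mem_and_one_mem_of_sum_two_pow {a b j₁ j₂ j₃ j₄ : ℕ} (ha : 2 ≤ a) (hab : a < b)
    (hd : 2 ^ j₁ + 2 ^ j₂ + 2 ^ j₃ + 2 ^ j₄ = 2 ^ a + 2 ^ b + 3) :
    0 ∈ ({j₁, j₂, j₃, j₄} : Multiset ℕ) ∧ 1 ∈ ({j₁, j₂, j₃, j₄} : Multiset ℕ) := by
  have := four_dvd_two_pow ha
  have := four_dvd_two_pow (ha.trans hab.le)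
  have := two_pow_ne_two_pow_add_two_pow hab j₁
  have := two_pow_ne_two_pow_add_two_pow hab j₂
  have := two_pow_ne_two_pow_add_two_pow hab j₃
  have := two_pow_ne_two_pow_add_two_pow hab j₄
  have := two_pow_cases j₁
  have := two_pow_cases j₂
  have := two_pow_cases j₃
  have := two_pow_cases j₄
  simp only [Multiset.insert_eq_cons, Multiset.mem_cons, Multiset.mem_singleton]
  omega

lemma monomial_mem_relIdeal {a b : ℕ} (ha : 2 ≤ a) (hab : a < b) (ha3 : a ≠ 3)
    {σ : Gen →₀ ℕ} (h4 : σ.weight hdeg = 4) (hd : σ.weight ideg = 2 ^ a + 2 ^ b + 3) :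
    monomial σ (1 : ZMod 2) ∈ relIdeal := by
  have := four_dvd_two_pow ha
  have := four_dvd_two_pow (ha.trans hab.le)
  rcases weight_hdeg_eq_four h4 with ⟨x, hx, rfl⟩ | ⟨i, j, rfl⟩ | ⟨j₁, j₂, j₃, j₄, rfl⟩
  · rw [Finsupp.weight_single, one_smul] at hd
    exact absurd (ideg_mod_four_ne_three hx) (by omega)
  · simp only [map_add, Finsupp.weight_single, one_smul] at hd
    simp only [monomial_add_single, ← X_pow_eq_monomial, pow_one]
    exact X_c_mul_X_h_mem_relIdeal ha hab ha3 hd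
  · simp only [map_add, Finsupp.weight_single, one_smul, ideg] at hd
    obtain ⟨h0, h1⟩ := zero_mem_and_one_mem_of_sum_two_pow ha hab hd
    convert multiset_prod_X_h_mem_relIdeal h0 h1 using 1
    simp [monomial_add_single, ← X_pow_eq_monomial, mul_assoc]

lemma component_eq_bot_of_monomial_mem {k d : ℕ}
    (h : ∀ σ : Gen →₀ ℕ, σ.weight hdeg = k → σ.weight ideg = d → monomial σ 1 ∈ relIdeal) :
    component k d = ⊥ := by
  rw [eq_bot_iff]
  rintro _ ⟨p, ⟨hk, hd⟩, rfl⟩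
  rw [SetLike.mem_coe, mem_weightedHomogeneousSubmodule] at hk hd
  rw [Submodule.mem_bot, AlgHom.toLinearMap_apply, mkE, Ideal.Quotient.mkₐ_eq_mk,
    Ideal.Quotient.eq_zero_iff_mem, p.as_sum]
  refine Ideal.sum_mem _ fun σ hσ => ?_
  rw [← mul_one (coeff σ p), ← C_mul_monomial]
  exact Ideal.mul_mem_left _ _ (h σ (hk (mem_support_iff.1 hσ)) (hd (mem_support_iff.1 hσ)))

/-- For all `t ≥ 1` with `t ≠ 2` and `u ≥ 1`, the component
`E^{4, 4 + n_{1,t,u}} = E^{4, 2^{t+u+1}+2^{t+1}+3}` is zero. -/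
theorem stmt5 (t u : ℕ) (ht : 1 ≤ t) (ht2 : t ≠ 2) (hu : 1 ≤ u) :
    component 4 (2 ^ (t + u + 1) + 2 ^ (t + 1) + 3) = ⊥ :=
  component_eq_bot_of_monomial_mem fun _ h4 hd =>
    monomial_mem_relIdeal (a := t + 1) (b := t + u + 1) (by omega) (by omega) (by omega) h4
      (by rw [hd]; ring)
end
end

section
/- For all natural numbers s ≥ 2 and u ≥ 1 with u ≠ 2, the bidegree (4, 4 + n_{s,1,u}) component E^{4, 2^{s+u+1}+2^{s+1}+2^s+1} of E is the zero vector space. -/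
noncomputable section

open MvPolynomial

/-! A monomial of homological degree 4 is a product of generators whose internal degrees have
at most as many binary digits as their homological degrees, so its internal degree is a sum of
at most four powers of two. A sum of `k` powers of two has at most `k` binary digits, and exactly
`k` only when the exponents are distinct; since `2^(s+u+1) + 2^(s+1) + 2^s + 1` has the four digits
`0, s, s+1, s+u+1`, the exponents of the monomial are exactly these. Only `h`'s and `c`'s have as
many digits as their degree, and `c_b` would need `b, b+1, b+3` among the digits, i.e. `u = 2`.
So the monomial is `h₀ h_s h_{s+1} h_{s+u+1}`, which is divisible by the relation `h_s h_{s+1}`. -/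

namespace Multiset

lemma exists_sum_two_pow_eq_of_not_nodup {M : Multiset ℕ} (hM : ¬ M.Nodup) :
    ∃ M' : Multiset ℕ, card M' + 1 = card M ∧
      (M'.map (2 ^ ·)).sum = (M.map (2 ^ ·)).sum := by
  classical
  obtain ⟨a, ha⟩ : ∃ a, 1 < count a M := by
    simpa [nodup_iff_count_le_one] using hM
  obtain ⟨M₀, rfl⟩ := le_iff_exists_add.mp (le_count_iff_replicate_le.mp ha)
  -- merge the two copies of `a` into one `a + 1`
  refine ⟨(a + 1) ::ₘ M₀, by simp, ?_⟩
  simp only [map_cons, sum_cons, map_add, sum_add, map_replicate, sum_replicate, pow_succ,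
    smul_eq_mul]
  ring

lemma length_bitIndices_sum_two_pow_eq_card {M : Multiset ℕ} (hM : M.Nodup) :
    (M.map (2 ^ ·)).sum.bitIndices.length = card M := by
  classical
  have hsum : (M.map (2 ^ ·)).sum = ∑ i ∈ M.toFinset, 2 ^ i := by
    rw [Finset.sum_eq_multiset_sum, toFinset_val, hM.dedup]
  rw [← List.toFinset_card_of_nodup Nat.bitIndices_nodup, hsum,
    Finset.toFinset_bitIndices_sum_two_pow, card_toFinset, hM.dedup]

lemma length_bitIndices_sum_two_pow_le (M : Multiset ℕ) :
    (M.map (2 ^ ·)).sum.bitIndices.length ≤ card M := by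
  induction h : card M using Nat.strong_induction_on generalizing M with
  | _ n ih =>
    by_cases hM : M.Nodup
    · exact (length_bitIndices_sum_two_pow_eq_card hM).trans_le h.le
    · obtain ⟨M', hcard, hsum⟩ := exists_sum_two_pow_eq_of_not_nodup hM
      rw [← hsum]
      exact (ih _ (by omega) M' rfl).trans (by omega)

lemma length_bitIndices_sum_two_pow_lt {M : Multiset ℕ} (hM : ¬ M.Nodup) :
    (M.map (2 ^ ·)).sum.bitIndices.length < card M := by
  obtain ⟨M', hcard, hsum⟩ := exists_sum_two_pow_eq_of_not_nodup hM
  rw [← hsum]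
  exact (length_bitIndices_sum_two_pow_le M').trans_lt (by omega)

theorem eq_of_sum_two_pow_eq {M N : Multiset ℕ} (hN : N.Nodup)
    (hsum : (M.map (2 ^ ·)).sum = (N.map (2 ^ ·)).sum) (hcard : card M ≤ card N) : M = N := by
  classical
  have hM : M.Nodup := by
    by_contra hM
    have := length_bitIndices_sum_two_pow_lt hM
    rw [hsum, length_bitIndices_sum_two_pow_eq_card hN] at this
    omega
  have hfin : M.toFinset = N.toFinset := by
    apply Finset.geomSum_injective le_rfl
    simpa only [Finset.sum_eq_multiset_sum, toFinset_val, hM.dedup, hN.dedup] using hsum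
  rw [← hM.dedup, ← hN.dedup, ← toFinset_val, hfin, toFinset_val]

end Multiset

section MonomialBits

variable {σ : Type*}

def monomialBits (B : σ → Multiset ℕ) (m : σ →₀ ℕ) : Multiset ℕ := m.sum fun x n => n • B x

variable {B : σ → Multiset ℕ}

lemma mem_monomialBits {m : σ →₀ ℕ} {i : ℕ} :
    i ∈ monomialBits B m ↔ ∃ x ∈ m.support, i ∈ B x := by
  simp only [monomialBits, Finsupp.sum, Multiset.mem_sum, Multiset.mem_nsmul]
  exact exists_congr fun x => and_congr_right fun hx =>
    and_iff_right (Finsupp.mem_support_iff.mp hx)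

lemma sum_map_two_pow_monomialBits {v : σ → ℕ} (hv : ∀ x, v x = ((B x).map (2 ^ ·)).sum)
    (m : σ →₀ ℕ) : ((monomialBits B m).map (2 ^ ·)).sum = Finsupp.weight v m := by
  let φ : Multiset ℕ →+ ℕ := Multiset.sumAddMonoidHom.comp (Multiset.mapAddMonoidHom (2 ^ ·))
  change φ (monomialBits B m) = _
  simp [monomialBits, Finsupp.weight_apply, Finsupp.sum, hv, φ, Multiset.coe_sumAddMonoidHom,
    Multiset.map_nsmul, Multiset.sum_nsmul]

lemma card_monomialBits (m : σ →₀ ℕ) :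
    Multiset.card (monomialBits B m) = ∑ x ∈ m.support, m x * Multiset.card (B x) := by
  simp [monomialBits, Finsupp.sum, Multiset.card_sum, Multiset.card_nsmul]

variable {w : σ → ℕ}

lemma card_monomialBits_le_weight (hw : ∀ x, Multiset.card (B x) ≤ w x) (m : σ →₀ ℕ) :
    Multiset.card (monomialBits B m) ≤ Finsupp.weight w m := by
  rw [card_monomialBits, Finsupp.weight_apply, Finsupp.sum]
  exact Finset.sum_le_sum fun x _ => Nat.mul_le_mul_left _ (hw x)

lemma card_eq_of_card_monomialBits_eq_weight (hw : ∀ x, Multiset.card (B x) ≤ w x)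
    {m : σ →₀ ℕ} (h : Multiset.card (monomialBits B m) = Finsupp.weight w m) {x : σ}
    (hx : x ∈ m.support) : Multiset.card (B x) = w x := by
  simp only [card_monomialBits, Finsupp.weight_apply, Finsupp.sum, smul_eq_mul] at h
  rw [Finset.sum_eq_sum_iff_of_le fun x _ => Nat.mul_le_mul_left _ (hw x)] at h
  exact Nat.eq_of_mul_eq_mul_left (Nat.pos_of_ne_zero (Finsupp.mem_support_iff.mp hx)) (h x hx)

end MonomialBits

def idegBits : Gen → Multiset ℕ
  | .h i => {i}
  | .c i => {i, i + 1, i + 3}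
  | .d i => {i + 1, i + 4}
  | .e i => {i, i + 2, i + 4}
  | .f i => {i + 1, i + 2, i + 4}
  | .g i => {i + 3, i + 4}
  | .p i => {i, i + 2, i + 5}
  | .D3 i => {i, i + 6}
  | .p' i => {i, i + 3, i + 6}

lemma ideg_eq_sum_idegBits (x : Gen) : ideg x = ((idegBits x).map (2 ^ ·)).sum := by
  cases x <;> simp [ideg, idegBits] <;> ring

lemma card_idegBits_le_hdeg (x : Gen) : Multiset.card (idegBits x) ≤ hdeg x := by
  cases x <;> simp [idegBits, hdeg]

lemma eq_h_or_eq_c_of_card_idegBits_eq {x : Gen} (hx : Multiset.card (idegBits x) = hdeg x) :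
    (∃ i, x = .h i) ∨ ∃ i, x = .c i := by
  cases x <;> simp_all [idegBits, hdeg]

lemma h_mem_support_of_weight_eq {s u : ℕ} (hs : 2 ≤ s) (hu : 1 ≤ u) (hu2 : u ≠ 2)
    {m : Gen →₀ ℕ} (hdeg_m : Finsupp.weight hdeg m = 4)
    (hideg_m : Finsupp.weight ideg m = 2 ^ (s + u + 1) + 2 ^ (s + 1) + 2 ^ s + 1) :
    Gen.h s ∈ m.support ∧ Gen.h (s + 1) ∈ m.support := by
  set N : Multiset ℕ := {0, s, s + 1, s + u + 1}
  have hN : N.Nodup := by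
    simp only [N, Multiset.insert_eq_cons, Multiset.nodup_cons, Multiset.mem_cons,
      Multiset.mem_singleton, Multiset.nodup_singleton, and_true]
    omega
  have hbits : monomialBits idegBits m = N := by
    refine Multiset.eq_of_sum_two_pow_eq hN ?_ ?_
    · rw [sum_map_two_pow_monomialBits ideg_eq_sum_idegBits, hideg_m]
      simp only [N, Multiset.insert_eq_cons, Multiset.map_cons, Multiset.sum_cons,
        Multiset.map_singleton, Multiset.sum_singleton, pow_zero]
      ring
    · exact (card_monomialBits_le_weight card_idegBits_le_hdeg m).trans_eq (by rw [hdeg_m]; rfl)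
  have hcard : Multiset.card (monomialBits idegBits m) = Finsupp.weight hdeg m := by
    rw [hbits, hdeg_m]; rfl
  have hgen : ∀ x ∈ m.support, ∃ i, x = .h i := by
    intro x hx
    rcases eq_h_or_eq_c_of_card_idegBits_eq
      (card_eq_of_card_monomialBits_eq_weight card_idegBits_le_hdeg hcard hx) with h | ⟨b, rfl⟩
    · exact h
    · have hb : ∀ j ∈ idegBits (.c b), j ∈ N := fun j hj => hbits ▸ mem_monomialBits.2 ⟨_, hx, hj⟩
      simp only [idegBits, N, Multiset.insert_eq_cons, Multiset.mem_cons, Multiset.mem_singleton,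
        forall_eq_or_imp, forall_eq] at hb
      omega
  have hN_sub : ∀ j ∈ N, Gen.h j ∈ m.support := by
    intro j hj
    obtain ⟨x, hx, hjx⟩ := mem_monomialBits.1 (hbits ▸ hj)
    obtain ⟨i, rfl⟩ := hgen x hx
    simp only [idegBits, Multiset.mem_singleton] at hjx
    exact hjx ▸ hx
  exact ⟨hN_sub s (by simp [N]), hN_sub (s + 1) (by simp [N])⟩

lemma monomial_mem_relIdeal_s6 {i : ℕ} {m : Gen →₀ ℕ} (h₀ : Gen.h i ∈ m.support)
    (h₁ : Gen.h (i + 1) ∈ m.support) (r : ZMod 2) : monomial m r ∈ relIdeal := by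
  classical
  have hrel : X (Gen.h i) * X (Gen.h (i + 1)) ∈ relIdeal :=
    Ideal.subset_span (Set.mem_iUnion.mpr ⟨i, Set.mem_insert _ _⟩)
  refine Ideal.mem_of_dvd _ ?_ hrel
  rw [X, X, monomial_mul, monomial_dvd_monomial]
  refine ⟨Or.inr fun x => ?_, by simp⟩
  rw [Finsupp.mem_support_iff] at h₀ h₁
  rw [Finsupp.add_apply, Finsupp.single_apply, Finsupp.single_apply]
  split_ifs <;> subst_vars <;> grind

/-- For all `s ≥ 2` and `u ≥ 1` with `u ≠ 2`, the component
`E^{4, 4 + n_{s,1,u}} = E^{4, 2^{s+u+1}+2^{s+1}+2^s+1}` is zero. -/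
theorem stmt6 (s u : ℕ) (hs : 2 ≤ s) (hu : 1 ≤ u) (hu2 : u ≠ 2) :
    component 4 (2 ^ (s + u + 1) + 2 ^ (s + 1) + 2 ^ s + 1) = ⊥ := by
  rw [eq_bot_iff]
  rintro _ ⟨p, ⟨hp_hdeg, hp_ideg⟩, rfl⟩
  rw [Submodule.mem_bot]
  refine Ideal.Quotient.eq_zero_iff_mem.mpr ?_
  rw [p.as_sum]
  refine Ideal.sum_mem _ fun m hm => ?_
  have hm' := mem_support_iff.mp hm
  obtain ⟨h₀, h₁⟩ := h_mem_support_of_weight_eq hs hu hu2 (hp_hdeg hm') (hp_ideg hm')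
  exact monomial_mem_relIdeal_s6 h₀ h₁ _
end
end

section
/- For all natural numbers s, t, u ≥ 2, there exist no natural numbers i and j with 2^j + 2^{i+3} + 2^{i+1} + 2^i = 2^{s+t+u} + 2^{s+t} + 2^s + 1. (No product h_j c_i has internal degree 4 + n_{s,t,u} when s, t, u ≥ 2.) -/
/-!
Write the right-hand side as `2^s * A + 1` with `A = 2^(t+u) + 2^t + 1` odd and at least `21`,
and the left-hand side as `2^j + 11 * 2^i`. The right-hand side is odd, so exactly one of `i, j`
vanishes. If `i = 0`, then `2^j + 11 ≡ 1 [MOD 4]` forces `j = 1`, and `13` is far too small.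
If `j = 0`, then `2^s * A = 11 * 2^i`, so the odd number `A` divides `11`, contradicting `A ≥ 21`.
-/

lemma Odd.dvd_of_two_pow_mul_eq {a b m n : ℕ} (ha : Odd a) (h : 2 ^ m * a = 2 ^ n * b) :
    a ∣ b :=
  (ha.coprime_two_right.pow_right n).dvd_of_dvd_mul_left ⟨2 ^ m, by rw [← h, mul_comm]⟩

lemma odd_two_pow_add_two_pow_add_one {t u : ℕ} (ht : t ≠ 0) : Odd (2 ^ (t + u) + 2 ^ t + 1) :=
  (((Nat.even_pow' (by omega)).2 even_two).add ((Nat.even_pow' ht).2 even_two)).add_one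

/-- For all `s, t, u ≥ 2` there are no naturals `i, j` with
`2^j + 2^{i+3} + 2^{i+1} + 2^i = 2^{s+t+u} + 2^{s+t} + 2^s + 1`:
no product `h_j c_i` has internal degree `4 + n_{s,t,u}` when `s, t, u ≥ 2`. -/
theorem stmt13 (s t u : ℕ) (hs : 2 ≤ s) (ht : 2 ≤ t) (hu : 2 ≤ u) :
    ¬ ∃ i j : ℕ, 2 ^ j + 2 ^ (i + 3) + 2 ^ (i + 1) + 2 ^ i =
      2 ^ (s + t + u) + 2 ^ (s + t) + 2 ^ s + 1 := by
  rintro ⟨i, j, h⟩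
  set A := 2 ^ (t + u) + 2 ^ t + 1
  have hA_odd : Odd A := odd_two_pow_add_two_pow_add_one (by omega)
  have hA_ge : 21 ≤ A := by
    have h4 : 2 ^ 2 ≤ 2 ^ t := Nat.pow_le_pow_right two_pos ht
    have h16 : 2 ^ 4 ≤ 2 ^ (t + u) := Nat.pow_le_pow_right two_pos (by omega)
    omega
  have h4 : 4 ∣ 2 ^ s := pow_dvd_pow 2 hs
  have hB_ge : 4 * 21 ≤ 2 ^ s * A := Nat.mul_le_mul (Nat.le_of_dvd (by positivity) h4) hA_ge
  have hB_dvd : 4 ∣ 2 ^ s * A := h4.mul_right A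
  have hrhs : 2 ^ (s + t + u) + 2 ^ (s + t) + 2 ^ s = 2 ^ s * A := by ring
  have hlhs : 2 ^ (i + 3) + 2 ^ (i + 1) + 2 ^ i = 11 * 2 ^ i := by ring
  rw [add_assoc (2 ^ j), add_assoc (2 ^ j), hlhs, hrhs] at h
  rcases i with _ | i <;> rcases j with _ | _ | j
  · omega
  · omega
  · rw [pow_add] at h; omega
  · have hA_dvd : A ∣ 11 := hA_odd.dvd_of_two_pow_mul_eq (m := s) (n := i + 1) (by omega)
    have := Nat.le_of_dvd (by norm_num) hA_dvd
    omega
  · rw [pow_succ] at h; omega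
  · rw [pow_succ, pow_succ] at h; omega
end
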